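/- arXiv:math/0602672 — 13 statements merged into one kernel-verified Lean document; each statement's English description precedes it below -/
import Mathlib

section
/- If {x_n} and {y_n} are log-convex sequences of nonnegative real numbers, then their binomial convolution z_n = ∑_{k=0}^{n} C(n,k) x_k y_{n-k} is log-convex. -/
/-!
Pascal's rule splits the convolution as `z_{n+1}(x, y) = z_n(x, Sy) + z_n(Sx, y)`, where `S` is the
shift, and shifts of log-convex sequences are log-convex. Since a sum of nonnegative sequences that
are log-convex at an index is again log-convex there, induction on the index, over all pairs of
sequences at once, reduces everything to the case `n = 0`, which is a direct computation.
-/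

def LogConvex (a : ℕ → ℝ) : Prop := ∀ n : ℕ, a n * a (n + 2) ≥ a (n + 1) ^ 2

open Finset

theorem LogConvex.comp_succ {a : ℕ → ℝ} (ha : LogConvex a) : LogConvex (fun n => a (n + 1)) :=
  fun n => ha (n + 1)

theorem sq_add_le_mul_add_mul {a b c a' b' c' : ℝ} (ha : 0 ≤ a) (hc : 0 ≤ c) (ha' : 0 ≤ a')
    (hc' : 0 ≤ c') (h : b ^ 2 ≤ a * c) (h' : b' ^ 2 ≤ a' * c') :
    (b + b') ^ 2 ≤ (a + a') * (c + c') := by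
  -- `|b b'| ≤ √(a c' · a' c) ≤ (a c' + a' c) / 2`
  have cross : 2 * b * b' ≤ a * c' + a' * c := by
    refine abs_le_of_sq_le_sq' ?_ (by positivity) |>.2
    nlinarith [sq_nonneg (a * c' - a' * c), mul_le_mul h h' (sq_nonneg b') (by positivity)]
  nlinarith

def binomialConvolution (x y : ℕ → ℝ) (n : ℕ) : ℝ :=
  ∑ k ∈ range (n + 1), (n.choose k : ℝ) * x k * y (n - k)

theorem binomialConvolution_eq_sum_antidiagonal (x y : ℕ → ℝ) (n : ℕ) :
    binomialConvolution x y n = ∑ ij ∈ antidiagonal n, (n.choose ij.1 : ℝ) * x ij.1 * y ij.2 :=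
  (Nat.sum_antidiagonal_eq_sum_range_succ (fun i j => (n.choose i : ℝ) * x i * y j) n).symm

theorem binomialConvolution_succ (x y : ℕ → ℝ) (n : ℕ) :
    binomialConvolution x y (n + 1) =
      binomialConvolution x (fun k => y (k + 1)) n +
        binomialConvolution (fun k => x (k + 1)) y n := by
  simp only [binomialConvolution_eq_sum_antidiagonal, mul_assoc]
  rw [sum_antidiagonal_choose_succ_mul (fun i j => x i * y j)]
  congr 1
  refine sum_congr rfl fun ij hij => ?_
  rw [Nat.choose_symm_of_eq_add (mem_antidiagonal.1 hij).symm]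

theorem binomialConvolution_nonneg {x y : ℕ → ℝ} (hx0 : ∀ n, 0 ≤ x n) (hy0 : ∀ n, 0 ≤ y n)
    (n : ℕ) : 0 ≤ binomialConvolution x y n :=
  sum_nonneg fun k _ => by have := hx0 k; have := hy0 (n - k); positivity

theorem LogConvex.binomialConvolution {x y : ℕ → ℝ} (hx0 : ∀ n, 0 ≤ x n) (hy0 : ∀ n, 0 ≤ y n)
    (hx : LogConvex x) (hy : LogConvex y) : LogConvex (binomialConvolution x y) := by
  intro n
  induction n generalizing x y with
  | zero =>
    simp only [_root_.binomialConvolution, zero_add, Nat.reduceAdd, sum_range_succ, range_one,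
      sum_singleton, Nat.choose_succ_self_right, Nat.cast_one, one_mul, tsub_zero,
      Nat.choose_self, tsub_self, zero_tsub, Nat.choose_zero_right, Nat.cast_ofNat,
      Nat.add_one_sub_one]
    nlinarith [mul_le_mul_of_nonneg_left (hx 0) (sq_nonneg (y 0)),
      mul_le_mul_of_nonneg_left (hy 0) (sq_nonneg (x 0))]
  | succ n ih =>
    have hSx0 : ∀ k, 0 ≤ x (k + 1) := fun k => hx0 (k + 1)
    have hSy0 : ∀ k, 0 ≤ y (k + 1) := fun k => hy0 (k + 1)
    simp only [binomialConvolution_succ x y]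
    exact sq_add_le_mul_add_mul
      (binomialConvolution_nonneg hx0 hSy0 _) (binomialConvolution_nonneg hx0 hSy0 _)
      (binomialConvolution_nonneg hSx0 hy0 _) (binomialConvolution_nonneg hSx0 hy0 _)
      (ih hx0 hSy0 hx hy.comp_succ) (ih hSx0 hy0 hx.comp_succ hy)

theorem logConvex_binomial_convolution (x y : ℕ → ℝ)
    (hx0 : ∀ n, 0 ≤ x n) (hy0 : ∀ n, 0 ≤ y n)
    (hx : LogConvex x) (hy : LogConvex y) :
    LogConvex (fun n => ∑ k ∈ Finset.range (n + 1), (n.choose k : ℝ) * x k * y (n - k)) :=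
  LogConvex.binomialConvolution hx0 hy0 hx hy
end

section
/- If {x_n} is a log-convex sequence of nonnegative real numbers, then the binomial transform z_n = ∑_{k=0}^{n} C(n,k) x_k is log-convex. -/
open Finset

section Semiring

variable {R : Type*} [Semiring R]

def binomialTransform (a : ℕ → R) (n : ℕ) : R :=
  ∑ k ∈ range (n + 1), (n.choose k : R) * a k

lemma binomialTransform_succ (a : ℕ → R) (n : ℕ) :
    binomialTransform a (n + 1)
      = binomialTransform a n + binomialTransform (fun k => a (k + 1)) n := by
  have hshift : ∑ k ∈ range (n + 1), (n.choose (k + 1) : R) * a (k + 1) + a 0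
      = binomialTransform a n := by
    have := sum_range_succ' (fun k => (n.choose k : R) * a k) (n + 1)
    simp only [Nat.choose_zero_right, Nat.cast_one, one_mul] at this
    rw [← this, sum_range_succ, Nat.choose_succ_self, Nat.cast_zero, zero_mul, add_zero]
    rfl
  rw [binomialTransform, sum_range_succ']
  simp only [Nat.choose_succ_succ, Nat.cast_add, add_mul, sum_add_distrib,
    Nat.choose_zero_right, Nat.cast_one, one_mul]
  rw [← hshift, binomialTransform]
  abel

end Semiring

lemma sq_binomialTransform_shift_le {x : ℕ → ℝ} (hx0 : ∀ n, 0 ≤ x n) (hx : LogConvex x)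
    (n : ℕ) :
    binomialTransform (fun k => x (k + 1)) n ^ 2
      ≤ binomialTransform x n * binomialTransform (fun k => x (k + 2)) n := by
  refine sum_sq_le_sum_mul_sum_of_sq_le_mul _ (fun k _ => mul_nonneg (Nat.cast_nonneg _) (hx0 _))
    (fun k _ => mul_nonneg (Nat.cast_nonneg _) (hx0 _)) fun k _ => ?_
  calc ((n.choose k : ℝ) * x (k + 1)) ^ 2 = (n.choose k : ℝ) ^ 2 * x (k + 1) ^ 2 := mul_pow ..
    _ ≤ (n.choose k : ℝ) ^ 2 * (x k * x (k + 2)) := by gcongr; exact hx k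
    _ = (n.choose k * x k) * (n.choose k * x (k + 2)) := by ring

theorem logConvex_binomial_transform (x : ℕ → ℝ)
    (hx0 : ∀ n, 0 ≤ x n) (hx : LogConvex x) :
    LogConvex (fun n => ∑ k ∈ Finset.range (n + 1), (n.choose k : ℝ) * x k) := by
  intro n
  change binomialTransform x n * binomialTransform x (n + 2) ≥ binomialTransform x (n + 1) ^ 2
  rw [binomialTransform_succ x (n + 1), binomialTransform_succ x n,
    binomialTransform_succ (fun k => x (k + 1)) n]
  linear_combination sq_binomialTransform_shift_le hx0 hx n
end

section
/- If {x_n} is a log-convex sequence of nonnegative real numbers, then z_n = ∑_{k=0}^{n} c(n,k) x_k is log-convex, where c(n,k) are the signless Stirling numbers of the first kind. -/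
/-- Signless Stirling numbers of the first kind. -/
def stirling1 : ℕ → ℕ → ℕ
  | 0, 0 => 1
  | 0, _ + 1 => 0
  | _ + 1, 0 => 0
  | n + 1, k + 1 => n * stirling1 n (k + 1) + stirling1 n k

/-!
Write `T x n = ∑ₖ c(n,k) x k` and `Sx = (x 1, x 2, …)` for the shifted sequence. The recurrence
`c(n+1,k+1) = n c(n,k+1) + c(n,k)` gives `T x (n+1) = n T x n + T (Sx) n`. Applying it twice, with
`a = T x n`, `b = T (Sx) n`, `c = T (S²x) n`,
`a · T x (n+2) - (T x (n+1))² = n a² + a b + (a c - b²)`.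
The last bracket is nonnegative because `m ↦ T (Sᵐx) n` is a nonnegative combination of the
log-convex sequences `m ↦ x (k + m)`, and such combinations are log-convex by Cauchy–Schwarz.
-/

namespace LogConvex

theorem comp_add_left {a : ℕ → ℝ} (ha : LogConvex a) (k : ℕ) :
    LogConvex (fun n => a (k + n)) :=
  fun n => ha (k + n)

theorem const_mul {a : ℕ → ℝ} (ha : LogConvex a) {c : ℝ} (hc : 0 ≤ c) :
    LogConvex (fun n => c * a n) := fun n => by
  have := mul_le_mul_of_nonneg_left (ha n) (mul_nonneg hc hc)
  linarith

theorem sum {ι : Type*} (s : Finset ι) {f : ι → ℕ → ℝ} (hf0 : ∀ i ∈ s, ∀ n, 0 ≤ f i n)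
    (hf : ∀ i ∈ s, LogConvex (f i)) : LogConvex (fun n => ∑ i ∈ s, f i n) := fun n =>
  Finset.sum_sq_le_sum_mul_sum_of_sq_le_mul s (fun i hi => hf0 i hi n)
    (fun i hi => hf0 i hi (n + 2)) (fun i hi => hf i hi n)

end LogConvex

theorem stirling1_eq_stirlingFirst : stirling1 = Nat.stirlingFirst := by
  funext n k
  induction n generalizing k with
  | zero => cases k <;> rfl
  | succ n ih => cases k <;> simp only [stirling1, Nat.stirlingFirst, ih]

noncomputable def stirling1Transform (x : ℕ → ℝ) (n : ℕ) : ℝ :=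
  ∑ k ∈ Finset.range (n + 1), (stirling1 n k : ℝ) * x k

theorem stirling1Transform_nonneg {x : ℕ → ℝ} (hx0 : ∀ n, 0 ≤ x n) (n : ℕ) :
    0 ≤ stirling1Transform x n :=
  Finset.sum_nonneg fun k _ => mul_nonneg (Nat.cast_nonneg _) (hx0 k)

theorem stirling1Transform_succ (x : ℕ → ℝ) (n : ℕ) :
    stirling1Transform x (n + 1) =
      n * stirling1Transform x n + stirling1Transform (fun k => x (k + 1)) n := by
  have hshift : (n : ℝ) * ∑ k ∈ Finset.range (n + 1), (stirling1 n (k + 1) : ℝ) * x (k + 1) =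
      n * stirling1Transform x n := by
    have hzero : (n : ℝ) * n.stirlingFirst 0 = 0 := by cases n <;> simp
    rw [stirling1Transform, Finset.sum_range_succ, Finset.sum_range_succ',
      stirling1_eq_stirlingFirst, Nat.stirlingFirst_eq_zero_of_lt n.lt_succ_self]
    linear_combination -x 0 * hzero
  rw [stirling1Transform, Finset.sum_range_succ', ← hshift, stirling1Transform, Finset.mul_sum,
    ← Finset.sum_add_distrib]
  simp only [stirling1, Nat.cast_add, Nat.cast_mul, Nat.cast_zero, zero_mul, add_zero]
  exact Finset.sum_congr rfl fun k _ => by ring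

theorem logConvex_stirling1Transform_shift {x : ℕ → ℝ} (hx0 : ∀ n, 0 ≤ x n) (hx : LogConvex x)
    (n : ℕ) : LogConvex (fun m => stirling1Transform (fun k => x (k + m)) n) := by
  simp only [stirling1Transform]
  exact LogConvex.sum _ (fun k _ m => mul_nonneg (Nat.cast_nonneg _) (hx0 _))
    fun k _ => (hx.comp_add_left k).const_mul (Nat.cast_nonneg _)

theorem logConvex_stirling1_transform (x : ℕ → ℝ)
    (hx0 : ∀ n, 0 ≤ x n) (hx : LogConvex x) :
    LogConvex (fun n => ∑ k ∈ Finset.range (n + 1), (stirling1 n k : ℝ) * x k) := by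
  intro n
  have hcs := logConvex_stirling1Transform_shift hx0 hx n 0
  have hb := stirling1Transform_nonneg (fun k => hx0 (k + 1)) n
  have ha := stirling1Transform_nonneg hx0 n
  simp only [add_zero, zero_add] at hcs
  change stirling1Transform x n * stirling1Transform x (n + 2) ≥ stirling1Transform x (n + 1) ^ 2
  rw [stirling1Transform_succ x (n + 1), stirling1Transform_succ x n,
    stirling1Transform_succ (fun k => x (k + 1)) n]
  push_cast
  nlinarith [mul_nonneg (Nat.cast_nonneg n : (0 : ℝ) ≤ n) (mul_self_nonneg (stirling1Transform x n)),
    mul_nonneg ha hb]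
end

section
/- The sequence of Bell numbers B_n is log-convex: B_{n-1} B_{n+1} ≥ B_n^2 for all n ≥ 1. -/
/-!
Dobinski's formula exhibits the Bell numbers as moments, `B n = e⁻¹ ∑ₖ kⁿ / k!`, because the
series `∑ₖ kⁿ / k!` satisfies the Bell recurrence (expand `(k + 1)ⁿ` binomially) and a solution of
that recurrence is determined by its initial value up to a scalar. Moments of a positive measure are
log-convex by Cauchy–Schwarz, since `(k^(n+1))² = kⁿ · k^(n+2)`.
-/

open Finset
open scoped Nat

lemma tsum_sq_le_tsum_mul_tsum_of_sq_le_mul {ι : Type*} {r f g : ι → ℝ}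
    (hf : ∀ i, 0 ≤ f i) (hg : ∀ i, 0 ≤ g i) (hrfg : ∀ i, r i ^ 2 ≤ f i * g i)
    (hr : Summable r) (hfs : Summable f) (hgs : Summable g) :
    (∑' i, r i) ^ 2 ≤ (∑' i, f i) * ∑' i, g i :=
  le_of_tendsto_of_tendsto' (hr.hasSum.pow 2) (Filter.Tendsto.mul hfs.hasSum hgs.hasSum) fun s =>
    sum_sq_le_sum_mul_sum_of_sq_le_mul s (fun i _ => hf i) (fun i _ => hg i) fun i _ => hrfg i

lemma mul_eq_mul_of_bell_recurrence {R : Type*} [CommSemiring R] {B C : ℕ → R}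
    (hB : ∀ n, B (n + 1) = ∑ k ∈ range (n + 1), (n.choose k : R) * B k)
    (hC : ∀ n, C (n + 1) = ∑ k ∈ range (n + 1), (n.choose k : R) * C k) (n : ℕ) :
    C 0 * B n = B 0 * C n := by
  induction n using Nat.strong_induction_on with
  | _ n ih =>
    rcases n with _ | n
    · exact mul_comm _ _
    · rw [hB, hC, mul_sum, mul_sum]
      refine sum_congr rfl fun k hk => ?_
      rw [mul_left_comm, ih k (by simpa [Nat.lt_succ_iff] using hk), mul_left_comm]

lemma summable_natCast_pow_div_factorial (n : ℕ) :
    Summable fun k : ℕ => (k : ℝ) ^ n / k ! := by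
  -- `kⁿ / n! ≤ eᵏ`
  have hbound : ∀ k : ℕ, (k : ℝ) ^ n / k ! ≤ n ! * (Real.exp 1 ^ k / k !) := fun k => by
    rw [← Real.exp_nat_mul, mul_one, ← mul_div_assoc]
    gcongr
    rw [← div_le_iff₀' (by positivity)]
    exact Real.pow_div_factorial_le_exp _ k.cast_nonneg n
  exact .of_nonneg_of_le (fun k => by positivity) hbound
    ((Real.summable_pow_div_factorial _).mul_left _)

lemma natCast_succ_pow_succ_div_factorial (n k : ℕ) :
    ((k + 1 : ℕ) : ℝ) ^ (n + 1) / (k + 1)! =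
      ∑ m ∈ range (n + 1), (n.choose m : ℝ) * ((k : ℝ) ^ m / k !) := by
  rw [Nat.factorial_succ, Nat.cast_mul, pow_succ', mul_div_mul_left _ _ (by positivity),
    Nat.cast_add_one, add_pow, sum_div]
  refine sum_congr rfl fun m _ => ?_
  ring

noncomputable def dobinskiSum (n : ℕ) : ℝ := ∑' k : ℕ, (k : ℝ) ^ n / k !

lemma dobinskiSum_zero_pos : 0 < dobinskiSum 0 :=
  (summable_natCast_pow_div_factorial 0).tsum_pos (fun k => by positivity) 0 (by simp)

lemma dobinskiSum_succ (n : ℕ) :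
    dobinskiSum (n + 1) = ∑ m ∈ range (n + 1), (n.choose m : ℝ) * dobinskiSum m := by
  unfold dobinskiSum
  rw [(summable_natCast_pow_div_factorial (n + 1)).tsum_eq_zero_add, Nat.cast_zero,
    zero_pow n.succ_ne_zero, zero_div, zero_add]
  simp_rw [natCast_succ_pow_succ_div_factorial]
  rw [Summable.tsum_finsetSum fun m _ => (summable_natCast_pow_div_factorial m).mul_left _]
  simp_rw [tsum_mul_left]

lemma dobinskiSum_sq_le (n : ℕ) :
    dobinskiSum (n + 1) ^ 2 ≤ dobinskiSum n * dobinskiSum (n + 2) :=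
  tsum_sq_le_tsum_mul_tsum_of_sq_le_mul (fun k => by positivity) (fun k => by positivity)
    (fun k => le_of_eq (by ring)) (summable_natCast_pow_div_factorial _)
    (summable_natCast_pow_div_factorial _) (summable_natCast_pow_div_factorial _)

theorem logConvex_bell (B : ℕ → ℝ) (hB0 : B 0 = 1)
    (hrec : ∀ n : ℕ, B (n + 1) = ∑ k ∈ Finset.range (n + 1), (n.choose k : ℝ) * B k) :
    ∀ n : ℕ, B n * B (n + 2) ≥ B (n + 1) ^ 2 := by
  intro n
  have hdobinski : ∀ m, dobinskiSum m = dobinskiSum 0 * B m := fun m => by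
    simpa [hB0] using (mul_eq_mul_of_bell_recurrence hrec dobinskiSum_succ m).symm
  have hsq := dobinskiSum_sq_le n
  rw [hdobinski n, hdobinski (n + 1), hdobinski (n + 2)] at hsq
  exact le_of_mul_le_mul_left (by linear_combination hsq) (pow_pos dobinskiSum_zero_pos 2)
end

section
/- Let {z_n} be a sequence of positive reals satisfying a_n z_{n+1} = b_n z_n + c_n z_{n-1} for n ≥ 1 with a_n, b_n, c_n > 0, and let λ_n = (b_n + √(b_n² + 4 a_n c_n))/(2 a_n) be the positive root of a_n λ² - b_n λ - c_n = 0. If z_0, z_1, z_2, z_3 is log-convex (z_0 z_2 ≥ z_1², z_1 z_3 ≥ z_2²) and a_n λ_{n-1} λ_{n+1} - b_n λ_{n-1} - c_n ≥ 0 for all n ≥ 2, then the full sequence {z_n} is log-convex. -/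
private lemma lam_facts (a b c : ℝ) (ha : 0 < a) (hb : 0 < b) (hc : 0 < c) :
    0 < (b + Real.sqrt (b ^ 2 + 4 * a * c)) / (2 * a) ∧
    b < a * ((b + Real.sqrt (b ^ 2 + 4 * a * c)) / (2 * a)) ∧
    a * ((b + Real.sqrt (b ^ 2 + 4 * a * c)) / (2 * a)) ^ 2 =
      b * ((b + Real.sqrt (b ^ 2 + 4 * a * c)) / (2 * a)) + c := by
  set s := Real.sqrt (b ^ 2 + 4 * a * c) with hs
  have hs0 : 0 ≤ s := Real.sqrt_nonneg _
  have hs2 : s ^ 2 = b ^ 2 + 4 * a * c := Real.sq_sqrt (by positivity)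
  have hsb : b < s := by nlinarith
  refine ⟨by positivity, ?_, ?_⟩
  · rw [mul_div_assoc', lt_div_iff₀ (by positivity)]
    nlinarith
  · field_simp
    nlinarith [hs2]

private lemma root_le2 (a b c L u v : ℝ) (ha : 0 < a) (hbL : b < a * L)
    (heq : a * L ^ 2 = b * L + c) (hu : 0 < u) (hv : 0 < v)
    (h : b * u * v + c * u ^ 2 ≤ a * v ^ 2) : L * u ≤ v := by
  by_contra h'
  push_neg at h'
  have hf : 0 < a * v + (a * L - b) * u := by
    nlinarith [mul_pos (sub_pos.mpr hbL) hu, mul_pos ha hv]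
  have he2 : a * L ^ 2 * u ^ 2 = b * L * u ^ 2 + c * u ^ 2 := by
    linear_combination u ^ 2 * heq
  nlinarith [mul_pos (sub_pos.mpr h') hf, he2, h]

private lemma le_root2 (a b c L u v : ℝ) (ha : 0 < a) (hbL : b < a * L)
    (heq : a * L ^ 2 = b * L + c) (hu : 0 < u) (hv : 0 < v)
    (h : a * v ^ 2 ≤ b * u * v + c * u ^ 2) : v ≤ L * u := by
  by_contra h'
  push_neg at h'
  have hf : 0 < a * v + (a * L - b) * u := by
    nlinarith [mul_pos (sub_pos.mpr hbL) hu, mul_pos ha hv]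
  have he2 : a * L ^ 2 * u ^ 2 = b * L * u ^ 2 + c * u ^ 2 := by
    linear_combination u ^ 2 * heq
  nlinarith [mul_pos (sub_pos.mpr h') hf, he2, h]

theorem logConvex_three_term_recurrence (a b c z lam : ℕ → ℝ)
    (hz : ∀ n, 0 < z n)
    (ha : ∀ n, 0 < a (n + 1)) (hb : ∀ n, 0 < b (n + 1)) (hc : ∀ n, 0 < c (n + 1))
    (hrec : ∀ n : ℕ, a (n + 1) * z (n + 2) = b (n + 1) * z (n + 1) + c (n + 1) * z n)
    (hlam : ∀ n : ℕ, lam (n + 1) =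
      (b (n + 1) + Real.sqrt ((b (n + 1)) ^ 2 + 4 * a (n + 1) * c (n + 1))) / (2 * a (n + 1)))
    (h01 : z 0 * z 2 ≥ z 1 ^ 2) (h12 : z 1 * z 3 ≥ z 2 ^ 2)
    (hcond : ∀ n : ℕ,
      a (n + 2) * lam (n + 1) * lam (n + 3) - b (n + 2) * lam (n + 1) - c (n + 2) ≥ 0) :
    ∀ n : ℕ, z n * z (n + 2) ≥ z (n + 1) ^ 2 := by
  have hlamF : ∀ n, 0 < lam (n + 1) ∧ b (n + 1) < a (n + 1) * lam (n + 1) ∧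
      a (n + 1) * lam (n + 1) ^ 2 = b (n + 1) * lam (n + 1) + c (n + 1) := by
    intro n
    rw [hlam n]
    exact lam_facts _ _ _ (ha n) (hb n) (hc n)
  have key : ∀ n : ℕ, lam (n + 1) * z (n + 1) ≤ z (n + 2) ∧
      z (n + 2) ≤ lam (n + 2) * z (n + 1) := by
    intro n
    induction n with
    | zero =>
      obtain ⟨hL1, hbL1, heq1⟩ := hlamF 0
      obtain ⟨hL2, hbL2, heq2⟩ := hlamF 1
      constructor
      · refine root_le2 _ _ _ _ _ _ (ha 0) hbL1 heq1 (hz 1) (hz 2) ?_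
        have e : a 1 * z 2 * z 2 = b 1 * z 1 * z 2 + c 1 * z 0 * z 2 := by
          linear_combination z 2 * hrec 0
        nlinarith [e, mul_nonneg (hc 0).le (sub_nonneg.mpr h01)]
      · refine le_root2 _ _ _ _ _ _ (ha 1) hbL2 heq2 (hz 1) (hz 2) ?_
        have e : a 2 * z 3 * z 1 = b 2 * z 2 * z 1 + c 2 * z 1 ^ 2 := by
          linear_combination z 1 * hrec 1
        nlinarith [e, mul_nonneg (ha 1).le (sub_nonneg.mpr h12)]
    | succ k ih =>
      obtain ⟨ihl, ihu⟩ := ih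
      obtain ⟨hM0, _, _⟩ := hlamF k
      obtain ⟨hL0, hbL, heq⟩ := hlamF (k + 1)
      obtain ⟨hN0, _, _⟩ := hlamF (k + 2)
      constructor
      · -- lam (k+2) * z (k+2) ≤ z (k+3)
        have e1 : a (k + 2) * z (k + 3) * lam (k + 2)
            = b (k + 2) * z (k + 2) * lam (k + 2) + c (k + 2) * z (k + 1) * lam (k + 2) := by
          linear_combination lam (k + 2) * hrec (k + 1)
        have he2 : a (k + 2) * lam (k + 2) ^ 2 * z (k + 2)
            = b (k + 2) * lam (k + 2) * z (k + 2) + c (k + 2) * z (k + 2) := by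
          linear_combination z (k + 2) * heq
        have h2 : 0 ≤ a (k + 2) * lam (k + 2) * (z (k + 3) - lam (k + 2) * z (k + 2)) := by
          nlinarith [mul_nonneg (hc (k + 1)).le (sub_nonneg.mpr ihu), e1, he2]
        by_contra h'
        push_neg at h'
        nlinarith [mul_pos (mul_pos (ha (k + 1)) hL0) (sub_pos.mpr h'), h2]
      · -- z (k+3) ≤ lam (k+3) * z (k+2)
        have e1 : a (k + 2) * z (k + 3) * lam (k + 1)
            = b (k + 2) * z (k + 2) * lam (k + 1) + c (k + 2) * z (k + 1) * lam (k + 1) := by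
          linear_combination lam (k + 1) * hrec (k + 1)
        have h2 : a (k + 2) * lam (k + 1) * (z (k + 3) - lam (k + 3) * z (k + 2)) ≤ 0 := by
          nlinarith [mul_nonneg (hc (k + 1)).le (sub_nonneg.mpr ihl),
            mul_nonneg (hz (k + 2)).le (hcond k), e1]
        by_contra h'
        push_neg at h'
        nlinarith [mul_pos (mul_pos (ha (k + 1)) hM0) (sub_pos.mpr h'), h2]
  intro n
  match n with
  | 0 => exact h01
  | Nat.succ m =>
    obtain ⟨hL0, _, _⟩ := hlamF (m + 1)
    have h1 := (key m).2
    have h2 := (key (m + 1)).1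
    nlinarith [mul_nonneg (hz (m + 1)).le (sub_nonneg.mpr h2),
      mul_nonneg (hz (m + 2)).le (sub_nonneg.mpr h1)]
end

section
/- Let {z_n} be a sequence of positive reals satisfying a_n z_{n+1} = b_n z_n + c_n z_{n-1} for n ≥ 1 with a_n, b_n, c_n > 0, and λ_n = (b_n + √(b_n² + 4 a_n c_n))/(2 a_n). Suppose there exist positive numbers μ_n with μ_n ≤ λ_n for all n ≥ 1, z_1 ≤ μ_1 z_0, z_2 ≤ μ_2 z_1, and a_n μ_{n-1} μ_{n+1} ≥ b_n μ_{n-1} + c_n for all n ≥ 2. Then {z_n} is log-convex. -/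
/-!
Let `λ_n` be the positive root of `a_n x² = b_n x + c_n`. If `z_n ≤ λ_n z_{n-1}`, the recurrence
gives `a_n z_{n+1} ≥ (b_n + c_n / λ_n) z_n = a_n λ_n z_n`, so `z_{n+1} / z_n ≥ λ_n ≥ z_n / z_{n-1}`,
which is log-convexity at `n`. It remains to get `z_n ≤ λ_n z_{n-1}` for all `n`; the stronger bound
`z_n ≤ μ_n z_{n-1}` propagates from `n` to `n + 2`, since it gives `z_n ≤ z_{n+1} / μ_n` and then
the condition on `μ` yields `a_{n+1} z_{n+2} ≤ (b_{n+1} + c_{n+1} / μ_n) z_{n+1} ≤ a_{n+1} μ_{n+2} z_{n+1}`.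
-/

namespace ThreeTermRecurrence

noncomputable def posRoot (a b c : ℝ) : ℝ :=
  (b + Real.sqrt (b ^ 2 + 4 * a * c)) / (2 * a)

lemma posRoot_pos {a b c : ℝ} (ha : 0 < a) (hc : 0 < c) : 0 < posRoot a b c := by
  have hsqrt : |b| < Real.sqrt (b ^ 2 + 4 * a * c) :=
    (Real.lt_sqrt (abs_nonneg b)).2 (by rw [sq_abs]; nlinarith)
  unfold posRoot
  have := neg_abs_le b
  apply div_pos <;> linarith

lemma mul_posRoot_sq {a b c : ℝ} (ha : a ≠ 0) (hdisc : 0 ≤ b ^ 2 + 4 * a * c) :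
    a * posRoot a b c ^ 2 = b * posRoot a b c + c := by
  have hsq := Real.sq_sqrt hdisc
  unfold posRoot
  generalize Real.sqrt (b ^ 2 + 4 * a * c) = s at hsq
  field_simp
  linear_combination hsq

variable {a b c x y w : ℝ}

lemma root_mul_le_next_of_le_root_mul {r : ℝ} (ha : 0 < a) (hr : 0 < r) (hc : 0 ≤ c)
    (hroot : a * r ^ 2 = b * r + c) (hrec : a * w = b * y + c * x) (hyx : y ≤ r * x) :
    r * y ≤ w := by
  have key : a * r * (r * y) ≤ a * r * w :=
    calc a * r * (r * y) = b * r * y + c * y := by linear_combination y * hroot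
      _ ≤ b * r * y + c * (r * x) := by gcongr
      _ = a * r * w := by linear_combination -r * hrec
  exact le_of_mul_le_mul_left key (mul_pos ha hr)

lemma next_le_mul_of_mul_le {μ μ' w' : ℝ} (ha : 0 < a) (hc : 0 ≤ c) (hμ : 0 < μ)
    (hw : 0 ≤ w) (hcond : a * μ * μ' ≥ b * μ + c) (hrec : a * w' = b * w + c * y)
    (hyw : μ * y ≤ w) : w' ≤ μ' * w := by
  have key : a * μ * w' ≤ a * μ * (μ' * w) :=
    calc a * μ * w' = b * μ * w + c * (μ * y) := by linear_combination μ * hrec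
      _ ≤ b * μ * w + c * w := by gcongr
      _ = (b * μ + c) * w := by ring
      _ ≤ a * μ * μ' * w := by gcongr
      _ = a * μ * (μ' * w) := by ring
  exact le_of_mul_le_mul_left key (mul_pos ha hμ)

end ThreeTermRecurrence

open ThreeTermRecurrence in
theorem logConvex_three_term_recurrence_mu_general (a b c z lam mu : ℕ → ℝ)
    (hz : ∀ n, 0 < z n)
    (ha : ∀ n, 0 < a (n + 1)) (hc : ∀ n, 0 < c (n + 1))
    (hrec : ∀ n : ℕ, a (n + 1) * z (n + 2) = b (n + 1) * z (n + 1) + c (n + 1) * z n)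
    (hlam : ∀ n : ℕ, lam (n + 1) =
      (b (n + 1) + Real.sqrt ((b (n + 1)) ^ 2 + 4 * a (n + 1) * c (n + 1))) / (2 * a (n + 1)))
    (hmupos : ∀ n, 0 < mu (n + 1))
    (hmu : ∀ n : ℕ, mu (n + 1) ≤ lam (n + 1))
    (h1 : z 1 ≤ mu 1 * z 0) (h2 : z 2 ≤ mu 2 * z 1)
    (hcond : ∀ n : ℕ,
      a (n + 2) * mu (n + 1) * mu (n + 3) ≥ b (n + 2) * mu (n + 1) + c (n + 2)) :
    ∀ n : ℕ, z n * z (n + 2) ≥ z (n + 1) ^ 2 := by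
  have hlam_pos n : 0 < lam (n + 1) := hlam n ▸ posRoot_pos (ha n) (hc n)
  have hlam_root n : a (n + 1) * lam (n + 1) ^ 2 = b (n + 1) * lam (n + 1) + c (n + 1) :=
    hlam n ▸ mul_posRoot_sq (ha n).ne' (by nlinarith [ha n, hc n])
  have hmu_mul n k : mu (n + 1) * z k ≤ lam (n + 1) * z k :=
    mul_le_mul_of_nonneg_right (hmu n) (hz k).le
  have hgrowth n (h : z (n + 1) ≤ lam (n + 1) * z n) : lam (n + 1) * z (n + 1) ≤ z (n + 2) :=
    root_mul_le_next_of_le_root_mul (ha n) (hlam_pos n) (hc n).le (hlam_root n) (hrec n) h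
  have hbound n : z (n + 1) ≤ mu (n + 1) * z n := by
    induction n using Nat.twoStepInduction with
    | zero => exact h1
    | one => exact h2
    | more m ih _ =>
      have hgrow_mu : mu (m + 1) * z (m + 1) ≤ z (m + 2) :=
        (hmu_mul m _).trans (hgrowth m (ih.trans (hmu_mul m m)))
      exact next_le_mul_of_mul_le (ha (m + 1)) (hc (m + 1)).le (hmupos m) (hz _).le (hcond m)
        (hrec (m + 1)) hgrow_mu
  intro n
  have hle := (hbound n).trans (hmu_mul n n)
  have hge := hgrowth n hle
  nlinarith [hz n, hz (n + 1)]

theorem logConvex_three_term_recurrence_mu (a b c z lam mu : ℕ → ℝ)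
    (hz : ∀ n, 0 < z n)
    (ha : ∀ n, 0 < a (n + 1)) (hb : ∀ n, 0 < b (n + 1)) (hc : ∀ n, 0 < c (n + 1))
    (hrec : ∀ n : ℕ, a (n + 1) * z (n + 2) = b (n + 1) * z (n + 1) + c (n + 1) * z n)
    (hlam : ∀ n : ℕ, lam (n + 1) =
      (b (n + 1) + Real.sqrt ((b (n + 1)) ^ 2 + 4 * a (n + 1) * c (n + 1))) / (2 * a (n + 1)))
    (hmupos : ∀ n, 0 < mu (n + 1))
    (hmu : ∀ n : ℕ, mu (n + 1) ≤ lam (n + 1))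
    (h1 : z 1 ≤ mu 1 * z 0) (h2 : z 2 ≤ mu 2 * z 1)
    (hcond : ∀ n : ℕ,
      a (n + 2) * mu (n + 1) * mu (n + 3) ≥ b (n + 2) * mu (n + 1) + c (n + 2)) :
    ∀ n : ℕ, z n * z (n + 2) ≥ z (n + 1) ^ 2 :=
  logConvex_three_term_recurrence_mu_general a b c z lam mu hz ha hc hrec hlam hmupos hmu h1 h2
    hcond
end

section
/- The derangement numbers d_n are log-convex for n ≥ 2: d_{n-1} d_{n+1} ≥ d_n² for all n ≥ 3. -/
lemma two_le_numDerangements : ∀ k : ℕ, 2 ≤ numDerangements (k + 3) := by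
  intro k
  induction k with
  | zero => decide
  | succ k ih =>
    have h : numDerangements (k + 4) = (k + 3) * (numDerangements (k + 2) + numDerangements (k + 3)) :=
      numDerangements_add_two (k + 2)
    have : numDerangements (k + 3) ≤ numDerangements (k + 4) := by
      rw [h]; nlinarith
    show 2 ≤ numDerangements (k + 4)
    exact ih.trans this

theorem logConvex_derangements :
    ∀ n : ℕ, numDerangements (n + 2) * numDerangements (n + 4) ≥ (numDerangements (n + 3)) ^ 2 := by
  intro n
  have h3 := numDerangements_succ (n + 2)
  have h4 := numDerangements_succ (n + 3)
  have key : ((numDerangements (n + 2) : ℤ)) * (numDerangements (n + 4)) - (numDerangements (n + 3)) ^ 2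
      = (numDerangements (n + 2) : ℤ) * (numDerangements (n + 3))
        + (-1) ^ n * ((numDerangements (n + 2) : ℤ) + (numDerangements (n + 3))) := by
    have e3 : ((numDerangements (n + 3) : ℤ)) = (n + 3) * (numDerangements (n + 2) : ℤ) - (-1) ^ (n + 2) := by
      exact_mod_cast h3
    have e4 : ((numDerangements (n + 4) : ℤ)) = (n + 4) * (numDerangements (n + 3) : ℤ) - (-1) ^ (n + 3) := by
      exact_mod_cast h4
    rw [e4, e3]; ring
  have hz : ((numDerangements (n + 3)) : ℤ) ^ 2 ≤ (numDerangements (n + 2) : ℤ) * (numDerangements (n + 4)) := by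
    rcases Nat.even_or_odd n with he | ho
    · rw [he.neg_one_pow] at key
      have h2 : (0 : ℤ) ≤ numDerangements (n + 2) := by positivity
      have h3' : (0 : ℤ) ≤ numDerangements (n + 3) := by positivity
      nlinarith [key]
    · rw [ho.neg_one_pow] at key
      obtain ⟨m, rfl⟩ := ho
      have ha : (2 : ℤ) ≤ numDerangements (2 * m + 1 + 2) := by
        exact_mod_cast two_le_numDerangements (2 * m)
      have hb : (2 : ℤ) ≤ numDerangements (2 * m + 1 + 3) := by
        exact_mod_cast two_le_numDerangements (2 * m + 1)
      nlinarith [key]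
  exact_mod_cast hz
end

section
/- The Motzkin numbers M_n form a log-convex sequence: M_{n-1} M_{n+1} ≥ M_n² for all n ≥ 1. -/
theorem logConvex_motzkin (M : ℕ → ℝ) (hM0 : M 0 = 1) (hM1 : M 1 = 1)
    (hrec : ∀ n : ℕ,
      ((n : ℝ) + 4) * M (n + 2) = (2 * (n : ℝ) + 5) * M (n + 1) + 3 * ((n : ℝ) + 1) * M n) :
    ∀ n : ℕ, M n * M (n + 2) ≥ M (n + 1) ^ 2 := by
  -- positivity
  have pos : ∀ n, 0 < M n := by
    intro n
    induction n using Nat.strong_induction_on with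
    | _ n ih =>
      match n with
      | 0 => simp [hM0]
      | 1 => simp [hM1]
      | n + 2 =>
        have h := hrec n
        have h1 : 0 < M n := ih n (by omega)
        have h2 : 0 < M (n + 1) := ih (n + 1) (by omega)
        nlinarith [Nat.cast_nonneg (α := ℝ) n]
  -- small values
  have hM2 : M 2 = 2 := by have := hrec 0; push_cast at this; linarith [this]
  have hM3 : M 3 = 4 := by have := hrec 1; push_cast at this; rw [hM2, hM1] at this; linarith
  have hM4 : M 4 = 9 := by have := hrec 2; push_cast at this; rw [hM3, hM2] at this; linarith
  -- ratio bounds: 2 ≤ M(n+2)/M(n+1) ≤ 7/2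
  have ratio : ∀ n, 2 * M (n + 1) ≤ M (n + 2) ∧ 2 * M (n + 2) ≤ 7 * M (n + 1) := by
    intro n
    induction n using Nat.strong_induction_on with
    | _ n ih =>
      match n with
      | 0 => rw [hM1, hM2]; norm_num
      | 1 => rw [hM2, hM3]; norm_num
      | 2 => rw [hM3, hM4]; norm_num
      | n + 3 =>
        obtain ⟨hl, hu⟩ := ih (n + 2) (by omega)
        have h := hrec (n + 3)
        push_cast at h
        have p1 := pos (n + 3)
        have p2 := pos (n + 4)
        constructor
        · nlinarith [Nat.cast_nonneg (α := ℝ) n]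
        · nlinarith [Nat.cast_nonneg (α := ℝ) n]
  -- strengthened invariant
  have inv : ∀ n, 0 ≤ M n * M (n + 2) - M (n + 1) ^ 2 ∧
      ((n : ℝ) + 1) * ((n : ℝ) + 5) * (M n * M (n + 2) - M (n + 1) ^ 2) ≤
        M (n + 1) * (M (n + 2) + 3 * M (n + 1)) := by
    intro n
    induction n with
    | zero => rw [hM0, hM1, hM2]; norm_num
    | succ n ih =>
      obtain ⟨hE, hB⟩ := ih
      have h1 := hrec n
      have h2 := hrec (n + 1)
      push_cast at h2
      have hid : ((n : ℝ) + 4) * ((n : ℝ) + 5) * (M (n + 1) * M (n + 3) - M (n + 2) ^ 2) =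
          3 * M (n + 1) * (M (n + 2) + 3 * M (n + 1)) -
            3 * ((n : ℝ) + 1) * ((n : ℝ) + 5) * (M n * M (n + 2) - M (n + 1) ^ 2) := by
        linear_combination ((n : ℝ) + 4) * M (n + 1) * h2 - ((n : ℝ) + 5) * M (n + 2) * h1
      have hn : (0 : ℝ) ≤ (n : ℝ) := Nat.cast_nonneg n
      have hE1 : 0 ≤ M (n + 1) * M (n + 3) - M (n + 2) ^ 2 := by
        nlinarith [mul_pos (show (0:ℝ) < (n:ℝ) + 4 by linarith)
          (show (0:ℝ) < (n:ℝ) + 5 by linarith)]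
      refine ⟨hE1, ?_⟩
      obtain ⟨ha, _⟩ := ratio n
      obtain ⟨hb, _⟩ := ratio (n + 1)
      have p1 := pos (n + 1)
      have p2 := pos (n + 2)
      -- 3 M(n+1)(M(n+2)+3M(n+1)) ≤ M(n+2)(M(n+3)+3M(n+2))
      have key : 3 * M (n + 1) * (M (n + 2) + 3 * M (n + 1)) ≤
          M (n + 2) * (M (n + 3) + 3 * M (n + 2)) := by
        nlinarith [mul_le_mul_of_nonneg_left ha (le_of_lt p2),
          mul_le_mul_of_nonneg_left hb (le_of_lt p2),
          mul_le_mul_of_nonneg_left ha (le_of_lt p1)]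
      have hb' : 2 * M (n + 2) ≤ M (n + 3) := hb
      push_cast
      show ((n:ℝ) + 1 + 1) * ((n:ℝ) + 1 + 5) * (M (n + 1 + 1 - 1) * M (n + 3) - M (n + 2) ^ 2) ≤
        M (n + 2) * (M (n + 3) + 3 * M (n + 2))
      simp only [Nat.add_sub_cancel]
      nlinarith [mul_nonneg (show (0:ℝ) ≤ (n:ℝ) + 8 by linarith) hE1,
        mul_nonneg (mul_nonneg (show (0:ℝ) ≤ 3*((n:ℝ)+1) by linarith)
          (show (0:ℝ) ≤ (n:ℝ)+5 by linarith)) hE]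
  intro n
  have := (inv n).1
  linarith
end

section
/- The Fine numbers f_n are log-convex for n ≥ 2: f_{n-1} f_{n+1} ≥ f_n² for all n ≥ 3. -/
theorem logConvex_fine (f : ℕ → ℝ) (hf0 : f 0 = 1) (hf1 : f 1 = 0)
    (hrec : ∀ n : ℕ,
      2 * ((n : ℝ) + 3) * f (n + 2) = (7 * ((n : ℝ) + 2) - 5) * f (n + 1)
        + 2 * (2 * ((n : ℝ) + 2) - 1) * f n) :
    ∀ n : ℕ, f (n + 2) * f (n + 4) ≥ f (n + 3) ^ 2 := by
  have hf2 : f 2 = 1 := by have h := hrec 0; push_cast at h; linarith [h]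
  have hf3 : f 3 = 2 := by have h := hrec 1; push_cast at h; linarith [h]
  have key : ∀ n : ℕ, 0 < f (n + 2) ∧ 0 < f (n + 3) ∧
      ((n : ℝ) + 5) * f (n + 3) ≤ (4 * (n : ℝ) + 14) * f (n + 2) ∧
      (4 * (n : ℝ) + 6) * f (n + 2) ≤ ((n : ℝ) + 3) * f (n + 3) := by
    intro n
    induction n with
    | zero =>
      refine ⟨by rw [hf2]; norm_num, by rw [hf3]; norm_num, ?_, ?_⟩ <;>
        rw [hf2, hf3] <;> norm_num
    | succ m ih =>
      obtain ⟨h2, h3, hub, hlb⟩ := ih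
      have hr := hrec (m + 2)
      push_cast at hr ⊢
      -- hr : 2 * (m + 5) * f (m + 4) = (7 * (m + 4) - 5) * f (m + 3) + 2 * (2 * (m + 4) - 1) * f (m + 2)
      have hm : (0:ℝ) ≤ (m : ℝ) := Nat.cast_nonneg m
      have h4 : 0 < f (m + 4) := by nlinarith
      refine ⟨h3, h4, ?_, ?_⟩
      · nlinarith [mul_nonneg hm (sub_nonneg.mpr hlb), sub_nonneg.mpr hlb]
      · nlinarith [mul_nonneg hm (sub_nonneg.mpr hub), sub_nonneg.mpr hub]
  intro n
  obtain ⟨h2, h3, hub, hlb⟩ := key n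
  have hr := hrec (n + 2)
  push_cast at hr
  have hm : (0:ℝ) ≤ (n : ℝ) := Nat.cast_nonneg n
  nlinarith [mul_nonneg (sub_nonneg.mpr hub) (by linarith : (0:ℝ) ≤ 2 * f (n + 3) + f (n + 2))]
end

section
/- Let {z_n} be positive reals satisfying (α₁n+α₀)z_{n+1} = (β₁n+β₀)z_n − (γ₁n+γ₀)z_{n-1} for n ≥ 1, where the three linear coefficients are positive for n ≥ 1. Set A = β₀γ₁ − β₁γ₀, B = γ₀α₁ − γ₁α₀, C = α₀β₁ − α₁β₀. If z_0 z_2 ≥ z_1² and B ≥ 0 and C ≥ 0, then {z_n} is log-convex. -/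
theorem logConvex_linear_three_term_i (α₁ α₀ β₁ β₀ γ₁ γ₀ : ℝ) (z : ℕ → ℝ)
    (hz : ∀ n, 0 < z n)
    (hα : ∀ n : ℕ, 1 ≤ n → 0 < α₁ * n + α₀)
    (hβ : ∀ n : ℕ, 1 ≤ n → 0 < β₁ * n + β₀)
    (hγ : ∀ n : ℕ, 1 ≤ n → 0 < γ₁ * n + γ₀)
    (hrec : ∀ n : ℕ, (α₁ * ((n : ℝ) + 1) + α₀) * z (n + 2) =
      (β₁ * ((n : ℝ) + 1) + β₀) * z (n + 1) - (γ₁ * ((n : ℝ) + 1) + γ₀) * z n)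
    (h012 : z 0 * z 2 ≥ z 1 ^ 2)
    (hB : γ₀ * α₁ - γ₁ * α₀ ≥ 0) (hC : α₀ * β₁ - α₁ * β₀ ≥ 0) :
    ∀ n : ℕ, z n * z (n + 2) ≥ z (n + 1) ^ 2 := by
  intro n
  induction n with
  | zero => exact h012
  | succ n ih =>
    have ha1 : 0 < α₁ * ((n : ℝ) + 1) + α₀ := by
      have := hα (n + 1) (by omega); push_cast at this; linarith
    have ha2 : 0 < α₁ * ((n : ℝ) + 2) + α₀ := by
      have := hα (n + 2) (by omega); push_cast at this; linarith
    have hc1 : 0 < γ₁ * ((n : ℝ) + 1) + γ₀ := by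
      have := hγ (n + 1) (by omega); push_cast at this; linarith
    have hrec1 := hrec n
    have hrec2 := hrec (n + 1)
    push_cast at hrec2
    set p := z (n + 1) with hp
    set q := z (n + 2) with hq
    -- Q₁ ≥ 0
    have hQ1 : 0 ≤ (β₁ * ((n : ℝ) + 1) + β₀) * p * q - (α₁ * ((n : ℝ) + 1) + α₀) * q ^ 2
        - (γ₁ * ((n : ℝ) + 1) + γ₀) * p ^ 2 := by
      have h1 : 0 ≤ (γ₁ * ((n : ℝ) + 1) + γ₀) * (z n * q - p ^ 2) :=
        mul_nonneg hc1.le (by linarith [ih])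
      have h2 : (β₁ * ((n : ℝ) + 1) + β₀) * p * q - (α₁ * ((n : ℝ) + 1) + α₀) * q ^ 2
          - (γ₁ * ((n : ℝ) + 1) + γ₀) * p ^ 2
          = (γ₁ * ((n : ℝ) + 1) + γ₀) * (z n * q - p ^ 2) := by
        linear_combination -q * hrec1
      linarith
    -- Q₂ ≥ 0 via a₁·Q₂ = a₂·Q₁ + C·pq + B·p²
    have hQ2 : 0 ≤ (β₁ * ((n : ℝ) + 2) + β₀) * p * q - (α₁ * ((n : ℝ) + 2) + α₀) * q ^ 2
        - (γ₁ * ((n : ℝ) + 2) + γ₀) * p ^ 2 := by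
      have key : (α₁ * ((n : ℝ) + 1) + α₀) *
          ((β₁ * ((n : ℝ) + 2) + β₀) * p * q - (α₁ * ((n : ℝ) + 2) + α₀) * q ^ 2
            - (γ₁ * ((n : ℝ) + 2) + γ₀) * p ^ 2)
          = (α₁ * ((n : ℝ) + 2) + α₀) *
          ((β₁ * ((n : ℝ) + 1) + β₀) * p * q - (α₁ * ((n : ℝ) + 1) + α₀) * q ^ 2
            - (γ₁ * ((n : ℝ) + 1) + γ₀) * p ^ 2)
          + (α₀ * β₁ - α₁ * β₀) * (p * q) + (γ₀ * α₁ - γ₁ * α₀) * p ^ 2 := by ring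
      have hpq : 0 ≤ p * q := (mul_pos (hz (n + 1)) (hz (n + 2))).le
      have hrhs : 0 ≤ (α₁ * ((n : ℝ) + 1) + α₀) *
          ((β₁ * ((n : ℝ) + 2) + β₀) * p * q - (α₁ * ((n : ℝ) + 2) + α₀) * q ^ 2
            - (γ₁ * ((n : ℝ) + 2) + γ₀) * p ^ 2) := by
        rw [key]
        have := mul_nonneg ha2.le hQ1
        have := mul_nonneg hC (by positivity : (0:ℝ) ≤ p * q)
        have := mul_nonneg hB (sq_nonneg p)
        linarith
      exact nonneg_of_mul_nonneg_right hrhs ha1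
    -- conclude: a₂·(p·z(n+3) − q²) = Q₂
    have key2 : (α₁ * ((n : ℝ) + 2) + α₀) * (p * z (n + 3) - q ^ 2)
        = (β₁ * ((n : ℝ) + 2) + β₀) * p * q - (α₁ * ((n : ℝ) + 2) + α₀) * q ^ 2
          - (γ₁ * ((n : ℝ) + 2) + γ₀) * p ^ 2 := by
      have : (α₁ * ((n : ℝ) + 2) + α₀) * z (n + 3)
          = (β₁ * ((n : ℝ) + 2) + β₀) * q - (γ₁ * ((n : ℝ) + 2) + γ₀) * p := by
        convert hrec2 using 3 <;> ring
      linear_combination p * this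
    have : 0 ≤ p * z (n + 3) - q ^ 2 :=
      nonneg_of_mul_nonneg_right (by rw [key2]; exact hQ2) ha2
    show z (n + 1) * z (n + 1 + 2) ≥ z (n + 1 + 1) ^ 2
    simpa using (by linarith : p * z (n + 3) ≥ q ^ 2)
end

section
/- Let {z_n} be positive reals satisfying (α₁n+α₀)z_{n+1} = (β₁n+β₀)z_n − (γ₁n+γ₀)z_{n-1} for n ≥ 1, where the three linear coefficients are positive for n ≥ 1. Set A = β₀γ₁ − β₁γ₀, B = γ₀α₁ − γ₁α₀, C = α₀β₁ − α₁β₀. If z_0 z_2 ≥ z_1², B < 0, C > 0, AC ≥ B², and z_0 B + z_1 C ≥ 0, then {z_n} is log-convex. -/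
set_option maxHeartbeats 800000 in
theorem logConvex_linear_three_term_ii (α₁ α₀ β₁ β₀ γ₁ γ₀ : ℝ) (z : ℕ → ℝ)
    (hz : ∀ n, 0 < z n)
    (hα : ∀ n : ℕ, 1 ≤ n → 0 < α₁ * n + α₀)
    (hβ : ∀ n : ℕ, 1 ≤ n → 0 < β₁ * n + β₀)
    (hγ : ∀ n : ℕ, 1 ≤ n → 0 < γ₁ * n + γ₀)
    (hrec : ∀ n : ℕ, (α₁ * ((n : ℝ) + 1) + α₀) * z (n + 2) =
      (β₁ * ((n : ℝ) + 1) + β₀) * z (n + 1) - (γ₁ * ((n : ℝ) + 1) + γ₀) * z n)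
    (h012 : z 0 * z 2 ≥ z 1 ^ 2)
    (hB : γ₀ * α₁ - γ₁ * α₀ < 0) (hC : α₀ * β₁ - α₁ * β₀ > 0)
    (hAC : (β₀ * γ₁ - β₁ * γ₀) * (α₀ * β₁ - α₁ * β₀) ≥ (γ₀ * α₁ - γ₁ * α₀) ^ 2)
    (hzBC : z 0 * (γ₀ * α₁ - γ₁ * α₀) + z 1 * (α₀ * β₁ - α₁ * β₀) ≥ 0) :
    ∀ n : ℕ, z n * z (n + 2) ≥ z (n + 1) ^ 2 := by
  have key : ∀ n : ℕ, z n * z (n + 2) ≥ z (n + 1) ^ 2 ∧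
      z n * (γ₀ * α₁ - γ₁ * α₀) + z (n + 1) * (α₀ * β₁ - α₁ * β₀) ≥ 0 := by
    intro n
    induction n with
    | zero => exact ⟨h012, hzBC⟩
    | succ n ih =>
      obtain ⟨hlc, hinv⟩ := ih
      have hz0 := hz n
      have hz1 := hz (n + 1)
      have hz2 := hz (n + 2)
      have hz3 := hz (n + 3)
      -- invariant at n+1
      have hinv' : z (n + 1) * (γ₀ * α₁ - γ₁ * α₀) +
          z (n + 2) * (α₀ * β₁ - α₁ * β₀) ≥ 0 := by
        have h1 : z n * 0 ≤ z n * (z (n + 1) * (γ₀ * α₁ - γ₁ * α₀) +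
            z (n + 2) * (α₀ * β₁ - α₁ * β₀)) := by
          have e : z n * (z (n + 1) * (γ₀ * α₁ - γ₁ * α₀) +
              z (n + 2) * (α₀ * β₁ - α₁ * β₀)) =
              z (n + 1) * (z n * (γ₀ * α₁ - γ₁ * α₀) +
                z (n + 1) * (α₀ * β₁ - α₁ * β₀)) +
              (z n * z (n + 2) - z (n + 1) ^ 2) * (α₀ * β₁ - α₁ * β₀) := by ring
          rw [mul_zero, e]
          have t1 := mul_nonneg hz1.le hinv
          have t2 := mul_nonneg (sub_nonneg.2 hlc) hC.le
          linarith
        exact le_of_mul_le_mul_left h1 hz0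
      -- coefficient positivity
      have ha' : 0 < α₁ * ((n : ℝ) + 1) + α₀ := by
        have := hα (n + 1) (by omega); push_cast at this; linarith
      have ha : 0 < α₁ * ((n : ℝ) + 2) + α₀ := by
        have := hα (n + 2) (by omega); push_cast at this; linarith
      have hc' : 0 < γ₁ * ((n : ℝ) + 1) + γ₀ := by
        have := hγ (n + 1) (by omega); push_cast at this; linarith
      have hr1 := hrec n
      have hr2 : (α₁ * ((n : ℝ) + 2) + α₀) * z (n + 3) =
          (β₁ * ((n : ℝ) + 2) + β₀) * z (n + 2) -
          (γ₁ * ((n : ℝ) + 2) + γ₀) * z (n + 1) := by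
        have h := hrec (n + 1)
        push_cast at h
        linarith [h]
      -- Q' ≤ 0
      have e1 : (α₁ * ((n : ℝ) + 1) + α₀) * z (n + 2) * z (n + 2) =
          ((β₁ * ((n : ℝ) + 1) + β₀) * z (n + 1) -
           (γ₁ * ((n : ℝ) + 1) + γ₀) * z n) * z (n + 2) := by rw [hr1]
      have hQ' : (α₁ * ((n : ℝ) + 1) + α₀) * z (n + 2) ^ 2 -
          (β₁ * ((n : ℝ) + 1) + β₀) * z (n + 1) * z (n + 2) +
          (γ₁ * ((n : ℝ) + 1) + γ₀) * z (n + 1) ^ 2 ≤ 0 := by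
        have t := mul_nonneg (sub_nonneg.2 hlc) hc'.le
        nlinarith [e1, t]
      -- Q ≤ 0, via a' * Q = a * Q' - z (n+1) * (C * z (n+2) + B * z (n+1))
      have hid : (α₁ * ((n : ℝ) + 1) + α₀) *
          ((α₁ * ((n : ℝ) + 2) + α₀) * z (n + 2) ^ 2 -
           (β₁ * ((n : ℝ) + 2) + β₀) * z (n + 1) * z (n + 2) +
           (γ₁ * ((n : ℝ) + 2) + γ₀) * z (n + 1) ^ 2) =
          (α₁ * ((n : ℝ) + 2) + α₀) *
          ((α₁ * ((n : ℝ) + 1) + α₀) * z (n + 2) ^ 2 -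
           (β₁ * ((n : ℝ) + 1) + β₀) * z (n + 1) * z (n + 2) +
           (γ₁ * ((n : ℝ) + 1) + γ₀) * z (n + 1) ^ 2) -
          z (n + 1) * (z (n + 1) * (γ₀ * α₁ - γ₁ * α₀) +
            z (n + 2) * (α₀ * β₁ - α₁ * β₀)) := by ring
      have hQ : (α₁ * ((n : ℝ) + 2) + α₀) * z (n + 2) ^ 2 -
          (β₁ * ((n : ℝ) + 2) + β₀) * z (n + 1) * z (n + 2) +
          (γ₁ * ((n : ℝ) + 2) + γ₀) * z (n + 1) ^ 2 ≤ 0 := by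
        have t1 := mul_nonneg ha.le (neg_nonneg.2 hQ')
        have t2 := mul_nonneg hz1.le hinv'
        have h1 : (α₁ * ((n : ℝ) + 1) + α₀) *
            ((α₁ * ((n : ℝ) + 2) + α₀) * z (n + 2) ^ 2 -
             (β₁ * ((n : ℝ) + 2) + β₀) * z (n + 1) * z (n + 2) +
             (γ₁ * ((n : ℝ) + 2) + γ₀) * z (n + 1) ^ 2) ≤
            (α₁ * ((n : ℝ) + 1) + α₀) * 0 := by
          rw [mul_zero]; nlinarith [hid, t1, t2]
        exact le_of_mul_le_mul_left h1 ha'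
      refine ⟨?_, hinv'⟩
      have e2 : (α₁ * ((n : ℝ) + 2) + α₀) * z (n + 3) * z (n + 1) =
          ((β₁ * ((n : ℝ) + 2) + β₀) * z (n + 2) -
           (γ₁ * ((n : ℝ) + 2) + γ₀) * z (n + 1)) * z (n + 1) := by rw [hr2]
      have h2 : (α₁ * ((n : ℝ) + 2) + α₀) * z (n + 2) ^ 2 ≤
          (α₁ * ((n : ℝ) + 2) + α₀) * (z (n + 1) * z (n + 3)) := by
        nlinarith [e2, hQ]
      exact le_of_mul_le_mul_left h2 ha
  exact fun n => (key n).1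
end

section
/- The central Delannoy numbers D(n) form a log-convex sequence: D(n-1) D(n+1) ≥ D(n)² for all n ≥ 1. -/
private lemma delannoy_hw (s N : ℝ) (hs14 : 7/5 ≤ s) (hN : 0 ≤ N) :
    0 < (3+2*s)*(2*N+3) - (2*N+4) := by
  have h75 : 0 ≤ s - 7/5 := by linarith
  nlinarith [mul_nonneg hN h75]

private lemma delannoy_step (s N x y z : ℝ) (hs : s^2 = 2) (hs14 : 7/5 ≤ s)
    (hN : 0 ≤ N) (hx : 0 < x) (hxy : x ≤ y)
    (hub : (2*N+4)*y ≤ (3+2*s)*(2*N+3)*x)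
    (hz : (N+2)*z = (6*N+9)*y - (N+1)*x) :
    y ≤ z ∧ (2*(N+1)+4)*z ≤ (3+2*s)*(2*(N+1)+3)*y := by
  have hs0 : (0:ℝ) ≤ s := by linarith
  have h75 : 0 ≤ s - 7/5 := by linarith
  have hy : 0 < y := lt_of_lt_of_le hx hxy
  constructor
  · have h2 : (N+2) * y ≤ (N+2) * z := by
      nlinarith [mul_nonneg hN (sub_nonneg.2 hxy)]
    exact le_of_mul_le_mul_left h2 (by linarith)
  · have hu : 0 ≤ (3+2*s)*(2*N+3)*x - (2*N+4)*y := by linarith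
    have hv : 0 ≤ y - x := by linarith
    have hA : (2*N+6)*(5*N+8) - (3+2*s)*(2*N+5)*(N+2) ≤ 0 := by
      nlinarith [mul_nonneg hN h75, mul_nonneg (mul_nonneg hN hN) h75]
    have hBe : (2*N+6)*(6*N+9)*((3+2*s)*(2*N+3))
          - (3+2*s)*(2*N+5)*(N+2)*((3+2*s)*(2*N+3))
          - (2*N+4)*(2*N+6)*(N+1)
        = -(33*N+48) - (24*N+36)*s := by
      linear_combination (-4*(2*N+5)*(N+2)*(2*N+3)) * hs
    have hB : (2*N+6)*(6*N+9)*((3+2*s)*(2*N+3))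
          - (3+2*s)*(2*N+5)*(N+2)*((3+2*s)*(2*N+3))
          - (2*N+4)*(2*N+6)*(N+1) ≤ 0 := by
      rw [hBe]
      nlinarith [mul_nonneg hN hs0]
    have hw : 0 < (3+2*s)*(2*N+3) - (2*N+4) := delannoy_hw s N hs14 hN
    have hident : ((3+2*s)*(2*N+3) - (2*N+4)) *
          ((2*N+6)*((6*N+9)*y - (N+1)*x) - (3+2*s)*(2*N+5)*(N+2)*y)
        = ((3+2*s)*(2*N+3)*x - (2*N+4)*y) *
            ((2*N+6)*(5*N+8) - (3+2*s)*(2*N+5)*(N+2))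
          + (y - x) * ((2*N+6)*(6*N+9)*((3+2*s)*(2*N+3))
            - (3+2*s)*(2*N+5)*(N+2)*((3+2*s)*(2*N+3))
            - (2*N+4)*(2*N+6)*(N+1)) := by ring
    have t1 := mul_nonpos_of_nonneg_of_nonpos hu hA
    have t2 := mul_nonpos_of_nonneg_of_nonpos hv hB
    have hP : (2*N+6)*((6*N+9)*y - (N+1)*x) - (3+2*s)*(2*N+5)*(N+2)*y ≤ 0 := by
      by_contra h
      push_neg at h
      nlinarith [mul_pos hw h]
    have hgoal2 : (N+2) * ((2*(N+1)+4) * z) ≤ (N+2) * ((3+2*s)*(2*(N+1)+3) * y) := by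
      have e : (N+2) * ((2*(N+1)+4) * z) = (2*N+6) * ((6*N+9)*y - (N+1)*x) := by
        linear_combination (2*N+6) * hz
      rw [e]
      nlinarith [hP]
    exact le_of_mul_le_mul_left hgoal2 (by linarith)

private lemma delannoy_quad (s N x y : ℝ) (hs : s^2 = 2) (hs14 : 7/5 ≤ s)
    (hN : 0 ≤ N) (hx : 0 < x) (hxy : x ≤ y)
    (hub : (2*N+4)*y ≤ (3+2*s)*(2*N+3)*x) :
    (N+2)*y^2 - (6*N+9)*x*y + (N+1)*x^2 ≤ 0 := by
  have hu : 0 ≤ (3+2*s)*(2*N+3)*x - (2*N+4)*y := by linarith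
  have hv : 0 ≤ y - x := by linarith
  have hw : 0 < (3+2*s)*(2*N+3) - (2*N+4) := delannoy_hw s N hs14 hN
  have hQEe : (N+2)*((3+2*s)*(2*N+3)*x)^2
      - (6*N+9)*((3+2*s)*(2*N+3)*x)*((2*N+4)*x)
      + (N+1)*(2*N+4)^2*x^2 = -((N+2)*x^2) := by
    linear_combination (4*(N+2)*(2*N+3)^2*x^2) * hs
  have hQE : (N+2)*((3+2*s)*(2*N+3)*x)^2
      - (6*N+9)*((3+2*s)*(2*N+3)*x)*((2*N+4)*x)
      + (N+1)*(2*N+4)^2*x^2 ≤ 0 := by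
    rw [hQEe]
    nlinarith [sq_nonneg x, mul_nonneg hN (sq_nonneg x)]
  have hident : ((3+2*s)*(2*N+3) - (2*N+4)) * x * ((2*N+4) *
        ((N+2)*y^2 - (6*N+9)*x*y + (N+1)*x^2))
      = ((3+2*s)*(2*N+3)*x - (2*N+4)*y) * ((2*N+4)*(-4*N-6)*x^2)
        + (y-x) * ((N+2)*((3+2*s)*(2*N+3)*x)^2
          - (6*N+9)*((3+2*s)*(2*N+3)*x)*((2*N+4)*x)
          + (N+1)*(2*N+4)^2*x^2)
        - (N+2) * (((3+2*s)*(2*N+3)*x - (2*N+4)*y) * (y-x) *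
            (((3+2*s)*(2*N+3) - (2*N+4)) * x)) := by ring
  have t1 : ((3+2*s)*(2*N+3)*x - (2*N+4)*y) * ((2*N+4)*(-4*N-6)*x^2) ≤ 0 := by
    apply mul_nonpos_of_nonneg_of_nonpos hu
    nlinarith [sq_nonneg x, mul_nonneg hN (sq_nonneg x)]
  have t2 : (y-x) * ((N+2)*((3+2*s)*(2*N+3)*x)^2
      - (6*N+9)*((3+2*s)*(2*N+3)*x)*((2*N+4)*x)
      + (N+1)*(2*N+4)^2*x^2) ≤ 0 := mul_nonpos_of_nonneg_of_nonpos hv hQE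
  have t3 : 0 ≤ (N+2) * (((3+2*s)*(2*N+3)*x - (2*N+4)*y) * (y-x) *
      (((3+2*s)*(2*N+3) - (2*N+4)) * x)) :=
    mul_nonneg (by linarith) (mul_nonneg (mul_nonneg hu hv) (mul_nonneg hw.le hx.le))
  have hwx : 0 < ((3+2*s)*(2*N+3) - (2*N+4)) * x * (2*N+4) :=
    mul_pos (mul_pos hw hx) (by linarith)
  have hLHS : ((3+2*s)*(2*N+3) - (2*N+4)) * x * ((2*N+4) *
      ((N+2)*y^2 - (6*N+9)*x*y + (N+1)*x^2)) ≤ 0 := by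
    rw [hident]; linarith
  by_contra h
  push_neg at h
  nlinarith [mul_pos hwx h]

theorem logConvex_delannoy (D : ℕ → ℝ) (hD0 : D 0 = 1) (hD1 : D 1 = 3)
    (hrec : ∀ n : ℕ,
      ((n : ℝ) + 2) * D (n + 2) = 3 * (2 * ((n : ℝ) + 2) - 1) * D (n + 1) - ((n : ℝ) + 1) * D n) :
    ∀ n : ℕ, D n * D (n + 2) ≥ D (n + 1) ^ 2 := by
  have hs : (Real.sqrt 2) ^ 2 = 2 := Real.sq_sqrt (by norm_num)
  have hs0 : 0 ≤ Real.sqrt 2 := Real.sqrt_nonneg 2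
  have hs14 : 7/5 ≤ Real.sqrt 2 := by nlinarith
  have key : ∀ n : ℕ, 0 < D n ∧ D n ≤ D (n+1) ∧
      (2*(n:ℝ)+4) * D (n+1) ≤ (3+2*Real.sqrt 2)*(2*(n:ℝ)+3) * D n := by
    intro n
    induction n with
    | zero =>
      refine ⟨by rw [hD0]; norm_num, by rw [hD0, hD1]; norm_num, ?_⟩
      rw [hD0, hD1]
      push_cast
      nlinarith
    | succ n ih =>
      obtain ⟨hx, hxy, hub⟩ := ih
      have hN : (0:ℝ) ≤ (n:ℝ) := Nat.cast_nonneg n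
      have hz : ((n:ℝ)+2) * D (n+2) = (6*(n:ℝ)+9) * D (n+1) - ((n:ℝ)+1) * D n := by
        linear_combination hrec n
      obtain ⟨h1, h2⟩ := delannoy_step (Real.sqrt 2) (n:ℝ) (D n) (D (n+1)) (D (n+2))
        hs hs14 hN hx hxy hub hz
      refine ⟨lt_of_lt_of_le hx hxy, h1, ?_⟩
      have hcast : ((n+1 : ℕ) : ℝ) = (n:ℝ) + 1 := by push_cast; ring
      rw [hcast]
      exact h2
  intro n
  obtain ⟨hx, hxy, hub⟩ := key n
  have hN : (0:ℝ) ≤ (n:ℝ) := Nat.cast_nonneg n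
  have hz : ((n:ℝ)+2) * D (n+2) = (6*(n:ℝ)+9) * D (n+1) - ((n:ℝ)+1) * D n := by
    linear_combination hrec n
  have hQ := delannoy_quad (Real.sqrt 2) (n:ℝ) (D n) (D (n+1)) hs hs14 hN hx hxy hub
  have h1 : ((n:ℝ)+2) * (D n * D (n+2)) ≥ ((n:ℝ)+2) * D (n+1)^2 := by
    have e : ((n:ℝ)+2) * (D n * D (n+2))
        = (6*(n:ℝ)+9) * D n * D (n+1) - ((n:ℝ)+1) * D n^2 := by
      linear_combination D n * hz
    rw [e]
    nlinarith [hQ]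
  have := le_of_mul_le_mul_left h1 (show (0:ℝ) < (n:ℝ)+2 by linarith)
  linarith
end

section
/- Let {z_n} be positive reals satisfying a z_{n+1} = b z_n + c z_{n-1} for n ≥ 1 with constants a, b, c > 0. If z_0 z_2 ≥ z_1², then the bisection {z_{2n}} is log-convex and the bisection {z_{2n+1}} is log-concave. (Dually, if z_0 z_2 ≤ z_1², then {z_{2n}} is log-concave and {z_{2n+1}} is log-convex.) -/
theorem bisection_logConvexity (a b c : ℝ) (z : ℕ → ℝ)
    (ha : 0 < a) (hb : 0 < b) (hc : 0 < c) (hz : ∀ n, 0 < z n)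
    (hrec : ∀ n : ℕ, a * z (n + 2) = b * z (n + 1) + c * z n) :
    (z 0 * z 2 ≥ z 1 ^ 2 →
      (∀ n : ℕ, z (2 * n) * z (2 * (n + 2)) ≥ z (2 * (n + 1)) ^ 2) ∧
      (∀ n : ℕ, z (2 * n + 1) * z (2 * (n + 2) + 1) ≤ z (2 * (n + 1) + 1) ^ 2)) ∧
    (z 0 * z 2 ≤ z 1 ^ 2 →
      (∀ n : ℕ, z (2 * n) * z (2 * (n + 2)) ≤ z (2 * (n + 1)) ^ 2) ∧
      (∀ n : ℕ, z (2 * n + 1) * z (2 * (n + 2) + 1) ≥ z (2 * (n + 1) + 1) ^ 2)) := by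
  set D : ℕ → ℝ := fun n => z n * z (n + 2) - z (n + 1) ^ 2 with hD
  have hstep : ∀ n : ℕ, a * D (n + 1) = -c * D n := by
    intro n
    simp only [hD]
    linear_combination z (n + 1) * hrec (n + 1) - z (n + 2) * hrec n
  have hE : ∀ n : ℕ, a ^ 2 * (z n * z (n + 4) - z (n + 2) ^ 2) = b ^ 2 * D n := by
    intro n
    simp only [hD]
    have h0 := hrec n
    have h1 := hrec (n + 1)
    have h2 := hrec (n + 2)
    linear_combination (a * z n) * h2 + (b * z n) * h1 - (a * z (n + 2) + b * z (n + 1)) * h0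
  -- sign alternation
  have halt_pos : ∀ n : ℕ, D 0 ≥ 0 → D (2 * n) ≥ 0 ∧ D (2 * n + 1) ≤ 0 := by
    intro n h0
    induction n with
    | zero =>
      refine ⟨by simpa using h0, ?_⟩
      have := hstep 0
      nlinarith
    | succ k ih =>
      obtain ⟨he, ho⟩ := ih
      have h1 := hstep (2 * k + 1)
      have h2 := hstep (2 * k + 2)
      constructor
      · have : a * D (2 * k + 2) ≥ 0 := by nlinarith
        have : D (2 * k + 2) ≥ 0 := by nlinarith
        have e : 2 * (k + 1) = 2 * k + 2 := by ring
        rwa [e]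
      · have hk2 : a * D (2 * k + 2) ≥ 0 := by nlinarith
        have hk2' : D (2 * k + 2) ≥ 0 := by nlinarith
        have : a * D (2 * k + 3) ≤ 0 := by nlinarith
        have : D (2 * k + 3) ≤ 0 := by nlinarith
        have e : 2 * (k + 1) + 1 = 2 * k + 3 := by ring
        rwa [e]
  have halt_neg : ∀ n : ℕ, D 0 ≤ 0 → D (2 * n) ≤ 0 ∧ D (2 * n + 1) ≥ 0 := by
    intro n h0
    induction n with
    | zero =>
      refine ⟨by simpa using h0, ?_⟩
      have := hstep 0
      nlinarith
    | succ k ih =>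
      obtain ⟨he, ho⟩ := ih
      have h1 := hstep (2 * k + 1)
      have h2 := hstep (2 * k + 2)
      constructor
      · have : a * D (2 * k + 2) ≤ 0 := by nlinarith
        have : D (2 * k + 2) ≤ 0 := by nlinarith
        have e : 2 * (k + 1) = 2 * k + 2 := by ring
        rwa [e]
      · have hk2 : a * D (2 * k + 2) ≤ 0 := by nlinarith
        have hk2' : D (2 * k + 2) ≤ 0 := by nlinarith
        have : a * D (2 * k + 3) ≥ 0 := by nlinarith
        have : D (2 * k + 3) ≥ 0 := by nlinarith
        have e : 2 * (k + 1) + 1 = 2 * k + 3 := by ring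
        rwa [e]
  constructor
  · intro h
    have hD0 : D 0 ≥ 0 := by simp only [hD]; nlinarith
    constructor
    · intro n
      have hd := (halt_pos n hD0).1
      have he := hE (2 * n)
      have e1 : 2 * (n + 2) = 2 * n + 4 := by ring
      have e2 : 2 * (n + 1) = 2 * n + 2 := by ring
      rw [e1, e2]
      nlinarith [pow_pos ha 2, mul_nonneg (sq_nonneg b) hd]
    · intro n
      have hd := (halt_pos n hD0).2
      have he := hE (2 * n + 1)
      have e1 : 2 * (n + 2) + 1 = 2 * n + 1 + 4 := by ring
      have e2 : 2 * (n + 1) + 1 = 2 * n + 1 + 2 := by ring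
      rw [e1, e2]
      nlinarith [pow_pos ha 2, mul_nonpos_of_nonneg_of_nonpos (sq_nonneg b) hd]
  · intro h
    have hD0 : D 0 ≤ 0 := by simp only [hD]; nlinarith
    constructor
    · intro n
      have hd := (halt_neg n hD0).1
      have he := hE (2 * n)
      have e1 : 2 * (n + 2) = 2 * n + 4 := by ring
      have e2 : 2 * (n + 1) = 2 * n + 2 := by ring
      rw [e1, e2]
      nlinarith [pow_pos ha 2, mul_nonpos_of_nonneg_of_nonpos (sq_nonneg b) hd]
    · intro n
      have hd := (halt_neg n hD0).2
      have he := hE (2 * n + 1)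
      have e1 : 2 * (n + 2) + 1 = 2 * n + 1 + 4 := by ring
      have e2 : 2 * (n + 1) + 1 = 2 * n + 1 + 2 := by ring
      rw [e1, e2]
      nlinarith [pow_pos ha 2, mul_nonneg (sq_nonneg b) hd]
end
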